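/- Let (X,d) and (Y,e) be metric spaces, D ⊆ X, θ : D → Y continuous on D, and A ⊆ X, B ⊆ Y dense. Then the maximal A,B-approximation system M (the set of all (a,m,b,n) ∈ A × ℕ × B × ℕ such that d(a,ξ) < 1/(m+1) implies e(b,θ(ξ)) < 1/(n+1) for all ξ ∈ D) satisfies the stronger condition: for every ξ ∈ D and every n ∈ ℕ there exist m ∈ ℕ and b ∈ B such that for every a ∈ A with d(a,ξ) < 1/(m+1), (a,m,b,n) ∈ M. -/

import Mathlib

open Metric

theorem ContinuousWithinAt.exists_mem_dense_forall_dist_lt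
    {X Y : Type*} [PseudoMetricSpace X] [PseudoMetricSpace Y]
    {θ : X → Y} {D : Set X} {ξ : X} (hθ : ContinuousWithinAt θ D ξ)
    {B : Set Y} (hB : Dense B) {ε : ℝ} (hε : 0 < ε) :
    ∃ δ > 0, ∃ b ∈ B, ∀ x, dist x ξ < δ → ∀ η ∈ D, dist x η < δ → dist b (θ η) < ε := by
  obtain ⟨b, hbξ, hb⟩ := dense_iff.mp hB (θ ξ) (ε / 2) (half_pos hε)
  obtain ⟨δ, hδ, hθδ⟩ := continuousWithinAt_iff.mp hθ (ε / 2) (half_pos hε)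
  refine ⟨δ / 2, half_pos hδ, b, hb, fun x hx η hη hxη => ?_⟩
  have hηξ : dist η ξ < δ :=
    calc dist η ξ ≤ dist x η + dist x ξ := dist_triangle_left _ _ _
      _ < δ / 2 + δ / 2 := add_lt_add hxη hx
      _ = δ := add_halves δ
  calc dist b (θ η) ≤ dist b (θ ξ) + dist (θ η) (θ ξ) := dist_triangle_right _ _ _
    _ < ε / 2 + ε / 2 := add_lt_add (mem_ball.mp hbξ) (hθδ hη hηξ)
    _ = ε := add_halves ε

theorem maximal_system_strong_condition_general
    {X Y : Type*} [MetricSpace X] [MetricSpace Y]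
    (A : Set X) (B : Set Y) (hB : Dense B)
    (D : Set X) (θ : X → Y) (hθ : ContinuousOn θ D)
    (M : Set (X × ℕ × Y × ℕ))
    (hM : M = {p : X × ℕ × Y × ℕ | p.1 ∈ A ∧ p.2.2.1 ∈ B ∧
        ∀ ξ ∈ D, dist p.1 ξ < 1 / (p.2.1 + 1) →
          dist p.2.2.1 (θ ξ) < 1 / (p.2.2.2 + 1)}) :
    ∀ ξ ∈ D, ∀ n : ℕ, ∃ m : ℕ, ∃ b ∈ B,
      ∀ a ∈ A, dist a ξ < 1 / (m + 1) → (a, m, b, n) ∈ M := by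
  intro ξ hξ n
  obtain ⟨δ, hδ, b, hb, hbθ⟩ :=
    (hθ ξ hξ).exists_mem_dense_forall_dist_lt hB (Nat.one_div_pos_of_nat (n := n))
  obtain ⟨m, hm⟩ := exists_nat_one_div_lt hδ
  refine ⟨m, b, hb, fun a ha haξ => ?_⟩
  subst hM
  exact ⟨ha, hb, fun η hη haη => hbθ a (haξ.trans hm) η hη (haη.trans hm)⟩

theorem maximal_system_strong_condition
    {X Y : Type*} [MetricSpace X] [MetricSpace Y]
    (A : Set X) (B : Set Y) (hA : Dense A) (hB : Dense B)
    (D : Set X) (θ : X → Y) (hθ : ContinuousOn θ D)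
    (M : Set (X × ℕ × Y × ℕ))
    (hM : M = {p : X × ℕ × Y × ℕ | p.1 ∈ A ∧ p.2.2.1 ∈ B ∧
        ∀ ξ ∈ D, dist p.1 ξ < 1 / (p.2.1 + 1) →
          dist p.2.2.1 (θ ξ) < 1 / (p.2.2.2 + 1)}) :
    ∀ ξ ∈ D, ∀ n : ℕ, ∃ m : ℕ, ∃ b ∈ B,
      ∀ a ∈ A, dist a ξ < 1 / (m + 1) → (a, m, b, n) ∈ M :=
  maximal_system_strong_condition_general A B hB D θ hθ M hM
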